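/- In the generalized ARCH model with E[ε_0⁴] < ∞, the stationary solution satisfies E[σ_0⁴] < ∞ if and only if α_1 < 1/√(E[ε_0⁴]). -/

import Mathlib

/-!
Write `σ₀² = ∑ᵢ Xᵢ` with `Xᵢ = (∏_{j<i} α₁ ε²_{-1-j}) (α₀ + l₁ L_{-1-i}) ≥ 0`. Independence and
stationarity give `E[Xᵢⁿ] = (E[(α₁ε₀²)ⁿ])ⁱ E[(α₀ + l₁L₀)ⁿ]`; for `n = 1` this is summable since
`α₁ < 1`, so the series converges almost surely. For `n = 2` the ratio is `r = α₁² E[ε₀⁴]`.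
Nonnegativity of the terms gives `E[(∑ Xᵢ)²] ≥ ∑ E[Xᵢ²]`, and Minkowski's inequality gives
`‖∑ Xᵢ‖₂ ≤ ∑ ‖Xᵢ‖₂ = ∑ (√r)ⁱ ‖X₀‖₂`, so `E[σ₀⁴] < ∞` exactly when `r < 1`.
-/

open MeasureTheory ProbabilityTheory Finset
open scoped ENNReal

namespace ENNReal

theorem tsum_sq_le_sq_tsum {ι : Type*} (f : ι → ℝ≥0∞) : ∑' i, f i ^ 2 ≤ (∑' i, f i) ^ 2 := by
  simp_rw [sq, ← ENNReal.tsum_mul_right]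
  exact ENNReal.tsum_le_tsum fun i => by gcongr; exact ENNReal.le_tsum i

theorem tsum_pow_mul_lt_top_iff {r C : ℝ≥0∞} (hC₀ : C ≠ 0) (hC : C ≠ ∞) :
    ∑' i : ℕ, r ^ i * C < ∞ ↔ r < 1 := by
  rw [ENNReal.tsum_mul_right, ENNReal.mul_lt_top_iff, ← tsum_geometric_lt_top,
    ENNReal.tsum_geometric]
  simp [hC₀, hC.lt_top]

end ENNReal

theorem tsum_eq_toReal_tsum_ofReal {ι : Type*} {u : ι → ℝ} (hu : ∀ i, 0 ≤ u i) :
    ∑' i, u i = (∑' i, ENNReal.ofReal (u i)).toReal := by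
  rw [ENNReal.tsum_toReal_eq fun _ => ENNReal.ofReal_ne_top]
  exact tsum_congr fun i => (ENNReal.toReal_ofReal (hu i)).symm

theorem lt_one_div_sqrt_iff {a m : ℝ} (ha : 0 ≤ a) (hm : 0 < m) :
    a < 1 / √m ↔ a ^ 2 * m < 1 := by
  have h : a * √m = √(a ^ 2 * m) := by rw [Real.sqrt_mul (sq_nonneg a), Real.sqrt_sq ha]
  rw [lt_div_iff₀ (Real.sqrt_pos.2 hm), h, Real.sqrt_lt' one_pos, one_pow]

section Lebesgue

variable {Ω : Type*} [MeasurableSpace Ω] {μ : Measure Ω}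

theorem lintegral_tsum_rpow_le {f : ℕ → Ω → ℝ≥0∞} (hf : ∀ i, Measurable (f i)) {q : ℝ}
    (hq : 1 ≤ q) :
    ∫⁻ ω, (∑' i, f i ω) ^ q ∂μ ≤ (∑' i, (∫⁻ ω, f i ω ^ q ∂μ) ^ q⁻¹) ^ q := by
  have hq₀ : 0 < q := by linarith
  have hpartial (n : ℕ) :
      ∫⁻ ω, (∑ i ∈ range n, f i ω) ^ q ∂μ ≤ (∑' i, (∫⁻ ω, f i ω ^ q ∂μ) ^ q⁻¹) ^ q := by
    rw [← ENNReal.rpow_inv_le_iff hq₀]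
    have h := eLpNorm'_sum_le (μ := μ) (s := range n) (fun i _ => (hf i).aestronglyMeasurable) hq
    simp only [eLpNorm', enorm_eq_self, one_div, Finset.sum_apply] at h
    exact h.trans (ENNReal.sum_le_tsum _)
  refine le_of_tendsto' (lintegral_tendsto_of_tendsto_of_monotone ?_ ?_ ?_) hpartial
  · exact fun n => (Finset.measurable_sum _ fun i _ => hf i).pow_const q |>.aemeasurable
  · exact ae_of_all _ fun ω m n hmn => ENNReal.rpow_le_rpow
      (Finset.sum_le_sum_of_subset (range_subset_range.2 hmn)) hq₀.le
  · exact ae_of_all _ fun ω => ((ENNReal.continuous_rpow_const).tendsto _).comp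
      (ENNReal.tendsto_nat_tsum _)

theorem lintegral_tsum_sq_lt_top_iff {f : ℕ → Ω → ℝ≥0∞} (hf : ∀ i, Measurable (f i))
    {r C : ℝ≥0∞} (hC₀ : C ≠ 0) (hC : C ≠ ∞) (hmom : ∀ i, ∫⁻ ω, f i ω ^ 2 ∂μ = r ^ i * C) :
    ∫⁻ ω, (∑' i, f i ω) ^ 2 ∂μ < ∞ ↔ r < 1 := by
  constructor
  · intro h
    rw [← ENNReal.tsum_pow_mul_lt_top_iff hC₀ hC]
    simp_rw [← hmom]
    rw [← lintegral_tsum fun i => ((hf i).pow_const 2).aemeasurable]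
    exact (lintegral_mono fun ω => ENNReal.tsum_sq_le_sq_tsum _).trans_lt h
  · intro hr
    have h := lintegral_tsum_rpow_le (μ := μ) hf one_le_two
    simp only [ENNReal.rpow_two, hmom] at h
    refine h.trans_lt (ENNReal.pow_lt_top ?_)
    simp_rw [ENNReal.mul_rpow_of_nonneg _ _ (by norm_num : (0 : ℝ) ≤ 2⁻¹), ← ENNReal.rpow_natCast,
      ← ENNReal.rpow_mul, mul_comm _ (2⁻¹ : ℝ), ENNReal.rpow_mul, ENNReal.rpow_natCast]
    rw [ENNReal.tsum_pow_mul_lt_top_iff (by simp [hC₀]) (by simp [hC])]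
    exact ENNReal.rpow_lt_one hr (by norm_num)

theorem integrable_toReal_sq_iff {S : Ω → ℝ≥0∞} (hS : AEMeasurable S μ)
    (hfin : ∀ᵐ ω ∂μ, S ω ≠ ∞) :
    Integrable (fun ω => (S ω).toReal ^ 2) μ ↔ ∫⁻ ω, S ω ^ 2 ∂μ < ∞ := by
  simp_rw [← ENNReal.toReal_pow]
  rw [integrable_toReal_iff (hS.pow_const 2) (hfin.mono fun ω h => ENNReal.pow_ne_top h),
    lt_top_iff_ne_top]

theorem lintegral_ofReal_const_mul {g : Ω → ℝ} (hg : Integrable g μ) (hg₀ : ∀ ω, 0 ≤ g ω)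
    {a : ℝ} (ha : 0 ≤ a) :
    ∫⁻ ω, ENNReal.ofReal (a * g ω) ∂μ = ENNReal.ofReal (a * ∫ ω, g ω ∂μ) := by
  rw [← integral_const_mul, ofReal_integral_eq_lintegral_ofReal (hg.const_mul a)
    (ae_of_all _ fun ω => mul_nonneg ha (hg₀ ω))]

theorem ae_tsum_ne_top_of_lintegral_eq_geometric {f : ℕ → Ω → ℝ≥0∞} (hf : ∀ i, Measurable (f i))
    {a c : ℝ≥0∞} (ha : a < 1) (hc : c ≠ ∞) (hmom : ∀ i, ∫⁻ ω, f i ω ∂μ = a ^ i * c) :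
    ∀ᵐ ω ∂μ, ∑' i, f i ω ≠ ∞ := by
  have h : ∫⁻ ω, ∑' i, f i ω ∂μ ≠ ∞ := by
    rw [lintegral_tsum fun i => (hf i).aemeasurable, tsum_congr hmom, ENNReal.tsum_mul_right]
    exact ENNReal.mul_ne_top (tsum_geometric_lt_top.2 ha).ne hc
  exact ae_lt_top (Measurable.tsum hf) h |>.mono fun ω h => h.ne

theorem lintegral_ofReal_pow_lt_top_of_memLp {Y : Ω → ℝ} {n : ℕ} (hn : n ≠ 0)
    (hY : MemLp Y n μ) : ∫⁻ ω, ENNReal.ofReal (Y ω) ^ n ∂μ < ∞ :=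
  calc ∫⁻ ω, ENNReal.ofReal (Y ω) ^ n ∂μ ≤ ∫⁻ ω, ‖Y ω‖ₑ ^ ((n : ℝ≥0∞).toReal) ∂μ :=
        lintegral_mono fun ω => by
          rw [ENNReal.toReal_natCast, ENNReal.rpow_natCast]
          gcongr
          exact Real.ofReal_le_enorm _
    _ < ∞ := lintegral_rpow_enorm_lt_top_of_eLpNorm_lt_top (by simpa using hn) (by simp)
        hY.eLpNorm_lt_top

theorem lintegral_ofReal_pow_ne_zero [NeZero μ] {Y : Ω → ℝ} (hY : Measurable Y)
    (hpos : ∀ ω, 0 < Y ω) (n : ℕ) : ∫⁻ ω, ENNReal.ofReal (Y ω) ^ n ∂μ ≠ 0 := by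
  rw [Ne, lintegral_eq_zero_iff (by fun_prop)]
  intro h
  obtain ⟨ω, hω⟩ := h.exists
  exact pow_ne_zero n (ENNReal.ofReal_pos.2 (hpos ω)).ne' hω

theorem sq_integral_le_integral_sq [IsProbabilityMeasure μ] {X : Ω → ℝ} (hX : MemLp X 2 μ) :
    (∫ ω, X ω ∂μ) ^ 2 ≤ ∫ ω, X ω ^ 2 ∂μ := by
  have h := variance_nonneg X μ
  rw [variance_eq_sub hX] at h
  simpa [sub_nonneg] using h

theorem one_le_integral_pow_four [IsProbabilityMeasure μ] {X : Ω → ℝ}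
    (hX : AEStronglyMeasurable X μ) (h₂ : ∫ ω, X ω ^ 2 ∂μ = 1) (h₄ : Integrable (fun ω => X ω ^ 4) μ) :
    1 ≤ ∫ ω, X ω ^ 4 ∂μ := by
  have h := sq_integral_le_integral_sq (μ := μ) (X := fun ω => X ω ^ 2)
    ((memLp_two_iff_integrable_sq (hX.pow 2)).2 (by simpa [← pow_mul] using h₄))
  simp_rw [h₂, ← pow_mul] at h
  simpa using h

end Lebesgue

section Independence

variable {Ω ι κ β γ : Type*} [MeasurableSpace Ω] [MeasurableSpace β] [MeasurableSpace γ]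
  {P : Measure Ω}

theorem lintegral_prod_mul_eq_of_indepFun {ε : ι → Ω → β} {L : κ → Ω → γ}
    (hε : ∀ i, Measurable (ε i)) (hL : ∀ k, Measurable (L k)) (hεind : iIndepFun ε P)
    (hind : IndepFun (fun ω i => ε i ω) (fun ω k => L k ω) P) {A : β → ℝ≥0∞} {B : γ → ℝ≥0∞}
    (hA : Measurable A) (hB : Measurable B) (s : Finset ι) (k : κ) :
    ∫⁻ ω, (∏ i ∈ s, A (ε i ω)) * B (L k ω) ∂P
      = (∏ i ∈ s, ∫⁻ ω, A (ε i ω) ∂P) * ∫⁻ ω, B (L k ω) ∂P := by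
  have hprod : Measurable fun x : ι → β => ∏ i ∈ s, A (x i) :=
    Finset.measurable_prod _ fun i _ => hA.comp (measurable_pi_apply i)
  rw [lintegral_mul_eq_lintegral_mul_lintegral_of_indepFun'' (f := fun ω => ∏ i ∈ s, A (ε i ω))
    (g := fun ω => B (L k ω)) (Finset.measurable_prod _ fun i _ => hA.comp (hε i)).aemeasurable
    (hB.comp (hL k)).aemeasurable (hind.comp hprod (hB.comp (measurable_pi_apply k)))]
  congr 1
  exact lintegral_prod_eq_prod_lintegral_of_indepFun s _ (hεind.comp _ fun _ => hA)
    fun i => hA.comp (hε i)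

theorem identDistrib_of_map_shift {G : Type*} [AddGroup G] {L : G → Ω → β}
    (hL : ∀ t, Measurable (L t))
    (hstat : ∀ k, P.map (fun ω t => L (t + k) ω) = P.map (fun ω t => L t ω)) (k : G) :
    IdentDistrib (L k) (L 0) P P := by
  have h : IdentDistrib (fun ω t => L (t + k) ω) (fun ω t => L t ω) P P :=
    ⟨(measurable_pi_lambda _ fun t => hL _).aemeasurable,
      (measurable_pi_lambda _ fun t => hL t).aemeasurable, hstat k⟩
  simpa [Function.comp_def] using h.comp (measurable_pi_apply 0)

end Independence

def archTerm {Ω : Type*} (α₀ α₁ l₁ : ℝ) (ε L : ℤ → Ω → ℝ) (t : ℤ) (i : ℕ) (ω : Ω) : ℝ :=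
  (∏ j ∈ range i, α₁ * ε (t - 1 - j) ω ^ 2) * (α₀ + l₁ * L (t - 1 - i) ω)

theorem measurable_archTerm {Ω : Type*} [MeasurableSpace Ω] {ε L : ℤ → Ω → ℝ}
    (hε : ∀ t, Measurable (ε t)) (hL : ∀ t, Measurable (L t)) (α₀ α₁ l₁ : ℝ) (t : ℤ) (i : ℕ) :
    Measurable (archTerm α₀ α₁ l₁ ε L t i) := by
  unfold archTerm
  fun_prop

theorem archTerm_nonneg {Ω : Type*} {ε L : ℤ → Ω → ℝ} {α₀ α₁ l₁ : ℝ} (hα₀ : 0 ≤ α₀)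
    (hα₁ : 0 ≤ α₁) (hl₁ : 0 ≤ l₁) (hL : ∀ t ω, 0 ≤ L t ω) (t : ℤ) (i : ℕ) (ω : Ω) :
    0 ≤ archTerm α₀ α₁ l₁ ε L t i ω :=
  mul_nonneg (prod_nonneg fun j _ => by positivity) (by have := hL (t - 1 - i) ω; positivity)

theorem lintegral_ofReal_archTerm_pow {Ω : Type*} [MeasurableSpace Ω] {P : Measure Ω}
    {ε L : ℤ → Ω → ℝ} {α₁ : ℝ} (hα₁ : 0 ≤ α₁)
    (hε : ∀ t, Measurable (ε t)) (hL : ∀ t, Measurable (L t)) (hεind : iIndepFun ε P)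
    (hεident : ∀ t, P.map (ε t) = P.map (ε 0))
    (hLstat : ∀ k : ℤ, P.map (fun ω t => L (t + k) ω) = P.map (fun ω t => L t ω))
    (hind : IndepFun (fun ω t => ε t ω) (fun ω t => L t ω) P) (α₀ l₁ : ℝ) (n : ℕ) (t : ℤ)
    (i : ℕ) :
    ∫⁻ ω, ENNReal.ofReal (archTerm α₀ α₁ l₁ ε L t i ω) ^ n ∂P
      = (∫⁻ ω, ENNReal.ofReal (α₁ * ε 0 ω ^ 2) ^ n ∂P) ^ i
        * ∫⁻ ω, ENNReal.ofReal (α₀ + l₁ * L 0 ω) ^ n ∂P := by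
  set A : ℝ → ℝ≥0∞ := fun x => ENNReal.ofReal (α₁ * x ^ 2) ^ n
  set B : ℝ → ℝ≥0∞ := fun y => ENNReal.ofReal (α₀ + l₁ * y) ^ n
  have hA : Measurable A := by fun_prop
  have hB : Measurable B := by fun_prop
  have hlag : Function.Injective fun j : ℕ => t - 1 - j := fun j k h => by simpa using h
  calc ∫⁻ ω, ENNReal.ofReal (archTerm α₀ α₁ l₁ ε L t i ω) ^ n ∂P
      = ∫⁻ ω, (∏ s ∈ (range i).image fun j : ℕ => t - 1 - j, A (ε s ω))
          * B (L (t - 1 - i) ω) ∂P := by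
        refine lintegral_congr fun ω => ?_
        rw [prod_image fun j _ k _ h => hlag h, archTerm,
          ENNReal.ofReal_mul (prod_nonneg fun j _ => by positivity),
          ENNReal.ofReal_prod_of_nonneg fun j _ => by positivity, mul_pow, ← prod_pow]
    _ = (∏ s ∈ (range i).image fun j : ℕ => t - 1 - j, ∫⁻ ω, A (ε s ω) ∂P)
          * ∫⁻ ω, B (L (t - 1 - i) ω) ∂P :=
        lintegral_prod_mul_eq_of_indepFun hε hL hεind hind hA hB _ _
    _ = _ := by
        have hεA (s : ℤ) : ∫⁻ ω, A (ε s ω) ∂P = ∫⁻ ω, A (ε 0 ω) ∂P :=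
          (IdentDistrib.comp ⟨(hε s).aemeasurable, (hε 0).aemeasurable, hεident s⟩ hA).lintegral_eq
        have hLB : ∫⁻ ω, B (L (t - 1 - i) ω) ∂P = ∫⁻ ω, B (L 0 ω) ∂P :=
          ((identDistrib_of_map_shift hL hLstat _).comp hB).lintegral_eq
        rw [prod_congr rfl fun s _ => hεA s, prod_const, card_image_of_injective _ hlag,
          card_range, hLB]

theorem stmt_10_general {Ω : Type*} [MeasurableSpace Ω] (P : Measure Ω) [IsProbabilityMeasure P]
    (ε L : ℤ → Ω → ℝ) (α₀ α₁ l₁ : ℝ)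
    (hα₀ : 0 ≤ α₀) (hα₁ : 0 < α₁) (hl₁ : 0 < l₁) (hα₁' : α₁ < 1)
    (hεmeas : ∀ t, Measurable (ε t))
    (hLmeas : ∀ t, Measurable (L t))
    -- (ε_t) is i.i.d. with mean 0 and unit second moment
    (hεindep : iIndepFun ε P)
    (hεident : ∀ t : ℤ, Measure.map (ε t) P = Measure.map (ε 0) P)
    (hεm2 : ∫ ω, (ε 0 ω) ^ 2 ∂P = 1)
    -- (L_t) is strictly stationary, positive, mean one, square integrable
    (hLpos : ∀ t, ∀ ω, 0 < L t ω)
    (hLstat : ∀ k : ℤ, Measure.map (fun ω => fun t => L (t + k) ω) P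
      = Measure.map (fun ω => fun t => L t ω) P)
    (hL2 : MemLp (L 0) 2 P)
    -- (L_t) is independent of (ε_t)
    (hindep : IndepFun (fun ω => fun t : ℤ => ε t ω) (fun ω => fun t : ℤ => L t ω) P)
    -- σsq is the stationary series solution
    (σsq : ℤ → Ω → ℝ)
    (hσ : ∀ t : ℤ, ∀ ω, σsq t ω =
      ∑' i : ℕ, (∏ j ∈ Finset.range i, α₁ * (ε (t - 1 - j) ω) ^ 2)
        * (α₀ + l₁ * L (t - 1 - i) ω))
    (hεm4 : Integrable (fun ω => (ε 0 ω) ^ 4) P) :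
    Integrable (fun ω => (σsq 0 ω) ^ 2) P ↔
      α₁ < 1 / Real.sqrt (∫ ω, (ε 0 ω) ^ 4 ∂P) := by
  set f : ℕ → Ω → ℝ≥0∞ := fun i ω => ENNReal.ofReal (archTerm α₀ α₁ l₁ ε L 0 i ω)
  have hf (i : ℕ) : Measurable (f i) := (measurable_archTerm hεmeas hLmeas _ _ _ _ _).ennreal_ofReal
  have hσS : σsq 0 = fun ω => (∑' i, f i ω).toReal := funext fun ω => (hσ 0 ω).trans
    (tsum_eq_toReal_tsum_ofReal
      (archTerm_nonneg hα₀ hα₁.le hl₁.le (fun t ω => (hLpos t ω).le) 0 · ω))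
  have hmom := lintegral_ofReal_archTerm_pow hα₁.le hεmeas hLmeas hεindep hεident hLstat hindep
    α₀ l₁
  have hY : MemLp (fun ω => α₀ + l₁ * L 0 ω) (2 : ℕ) P := (memLp_const α₀).add (hL2.const_mul l₁)
  have hY_pos (ω : Ω) : 0 < α₀ + l₁ * L 0 ω := by have := hLpos 0 ω; positivity
  have hε₂ : ∫⁻ ω, ENNReal.ofReal (α₁ * ε 0 ω ^ 2) ∂P = ENNReal.ofReal α₁ := by
    simpa [hεm2] using lintegral_ofReal_const_mul
      (Integrable.of_integral_ne_zero (μ := P) (by simp [hεm2])) (fun ω => sq_nonneg (ε 0 ω)) hα₁.le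
  have hε₄ : ∫⁻ ω, ENNReal.ofReal (α₁ * ε 0 ω ^ 2) ^ 2 ∂P
      = ENNReal.ofReal (α₁ ^ 2 * ∫ ω, ε 0 ω ^ 4 ∂P) := by
    rw [← lintegral_ofReal_const_mul hεm4 (fun ω => by positivity) (sq_nonneg α₁)]
    exact lintegral_congr fun ω => by rw [← ENNReal.ofReal_pow (by positivity)]; ring_nf
  -- `σsq 0` takes the junk value `0` where the series diverges.
  have hSfin := ae_tsum_ne_top_of_lintegral_eq_geometric hf (ENNReal.ofReal_lt_one.2 hα₁')
    (lintegral_ofReal_pow_lt_top_of_memLp one_ne_zero (hY.mono_exponent (by simp))).ne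
    (by simpa [hε₂] using hmom 1 0)
  rw [hσS, integrable_toReal_sq_iff (Measurable.tsum hf).aemeasurable hSfin,
    lintegral_tsum_sq_lt_top_iff hf (lintegral_ofReal_pow_ne_zero (by fun_prop) hY_pos 2)
      (lintegral_ofReal_pow_lt_top_of_memLp two_ne_zero hY).ne (hmom 2 0),
    hε₄, ENNReal.ofReal_lt_one, lt_one_div_sqrt_iff hα₁.le
      (one_pos.trans_le (one_le_integral_pow_four (hεmeas 0).aestronglyMeasurable hεm2 hεm4))]

/-- Fourth moment of the stationary ARCH solution: `E[σ₀⁴] < ∞` iff `α₁ < 1/√(E[ε₀⁴])`. -/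
theorem stmt_10 {Ω : Type*} [MeasurableSpace Ω] (P : Measure Ω) [IsProbabilityMeasure P]
    (ε L : ℤ → Ω → ℝ) (α₀ α₁ l₁ : ℝ)
    (hα₀ : 0 ≤ α₀) (hα₁ : 0 < α₁) (hl₁ : 0 < l₁) (hα₁' : α₁ < 1)
    (hεmeas : ∀ t, Measurable (ε t))
    (hLmeas : ∀ t, Measurable (L t))
    -- (ε_t) is i.i.d. with mean 0 and unit second moment
    (hεindep : iIndepFun ε P)
    (hεident : ∀ t : ℤ, Measure.map (ε t) P = Measure.map (ε 0) P)
    (hεmean : ∫ ω, ε 0 ω ∂P = 0)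
    (hεm2 : ∫ ω, (ε 0 ω) ^ 2 ∂P = 1)
    -- (L_t) is strictly stationary, positive, mean one, square integrable
    (hLpos : ∀ t, ∀ ω, 0 < L t ω)
    (hLstat : ∀ k : ℤ, Measure.map (fun ω => fun t => L (t + k) ω) P
      = Measure.map (fun ω => fun t => L t ω) P)
    (hLmean : ∫ ω, L 0 ω ∂P = 1)
    (hL2 : MemLp (L 0) 2 P)
    -- (L_t) is independent of (ε_t)
    (hindep : IndepFun (fun ω => fun t : ℤ => ε t ω) (fun ω => fun t : ℤ => L t ω) P)
    -- σsq is the stationary series solution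
    (σsq : ℤ → Ω → ℝ)
    (hσ : ∀ t : ℤ, ∀ ω, σsq t ω =
      ∑' i : ℕ, (∏ j ∈ Finset.range i, α₁ * (ε (t - 1 - j) ω) ^ 2)
        * (α₀ + l₁ * L (t - 1 - i) ω))
    (hεm4 : Integrable (fun ω => (ε 0 ω) ^ 4) P) :
    Integrable (fun ω => (σsq 0 ω) ^ 2) P ↔
      α₁ < 1 / Real.sqrt (∫ ω, (ε 0 ω) ^ 4 ∂P) :=
  stmt_10_general P ε L α₀ α₁ l₁ hα₀ hα₁ hl₁ hα₁' hεmeas hLmeas hεindep hεident hεm2 hLpos hLstat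
    hL2 hindep σsq hσ hεm4
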